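/- arXiv:0802.3930 — 2 statements merged into one kernel-verified Lean document; each statement's English description precedes it below -/
import Mathlib

section
/- Let ω : [0,1] → [0,∞) be a strictly increasing modulus of continuity, and let ω^{-1} denote its inverse function. Then for every f ∈ Diff₀^ω[0,1] with γ(f) = 1 there exists a constant C(f) > 0 such that for all n ∈ ℕ with 2/n ≤ ω(1) one has log Γ_n(f) ≤ log( n / ω^{-1}(2/n) ) + C(f) · n · ω(1/n). -/
open Set Filter

/-- The sup norm over `[0,1]` of the derivative (within `[0,1]`) of a map. -/
noncomputable def supAbsDeriv (f : ℝ → ℝ) : ℝ :=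
  sSup ((fun x => |derivWithin f (Set.Icc (0:ℝ) 1) x|) '' Set.Icc (0:ℝ) 1)

/-- `IsDiff01 f g` says that `f` is a `C¹` diffeomorphism of `[0,1]` fixing `0` and `1`,
with everywhere positive derivative, and `g` is its inverse. -/
structure IsDiff01 (f g : ℝ → ℝ) : Prop where
  mapsTo : Set.MapsTo f (Set.Icc (0:ℝ) 1) (Set.Icc (0:ℝ) 1)
  inv_mapsTo : Set.MapsTo g (Set.Icc (0:ℝ) 1) (Set.Icc (0:ℝ) 1)
  left_inv : ∀ x ∈ Set.Icc (0:ℝ) 1, g (f x) = x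
  right_inv : ∀ x ∈ Set.Icc (0:ℝ) 1, f (g x) = x
  map_zero : f 0 = 0
  map_one : f 1 = 1
  contDiffOn : ContDiffOn ℝ 1 f (Set.Icc (0:ℝ) 1)
  inv_contDiffOn : ContDiffOn ℝ 1 g (Set.Icc (0:ℝ) 1)
  deriv_pos : ∀ x ∈ Set.Icc (0:ℝ) 1, 0 < derivWithin f (Set.Icc (0:ℝ) 1) x

/-- The growth sequence `Γ_n(f) = max (‖(fⁿ)'‖_∞, ‖(f⁻ⁿ)'‖_∞)`, where `g = f⁻¹`. -/
noncomputable def Gamma (f g : ℝ → ℝ) (n : ℕ) : ℝ :=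
  max (supAbsDeriv (f^[n])) (supAbsDeriv (g^[n]))

/-- `γ(f) = lim_n Γ_n(f)^(1/n) = 1`, where `g = f⁻¹`. -/
def GammaEqOne (f g : ℝ → ℝ) : Prop :=
  Filter.Tendsto (fun n : ℕ => (Gamma f g n) ^ (1/(n:ℝ))) Filter.atTop (nhds 1)

/-- A modulus of continuity: continuous, non-decreasing, nonnegative on `[0,1]`,
vanishing at `0`, and subadditive. -/
structure IsModCont (ω : ℝ → ℝ) : Prop where
  continuousOn : ContinuousOn ω (Set.Icc (0:ℝ) 1)
  monotoneOn : MonotoneOn ω (Set.Icc (0:ℝ) 1)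
  nonneg : ∀ x ∈ Set.Icc (0:ℝ) 1, 0 ≤ ω x
  map_zero : ω 0 = 0
  subadd : ∀ a b : ℝ, 0 ≤ a → 0 ≤ b → a + b ≤ 1 → ω (a + b) ≤ ω a + ω b

/-- Membership in `Diff₀^ω[0,1]`: the derivative of `f` has modulus of continuity
controlled by `ω` up to a multiplicative constant. -/
def InDiffOmega (ω f : ℝ → ℝ) : Prop :=
  ∃ C > 0, ∀ x ∈ Set.Icc (0:ℝ) 1, ∀ y ∈ Set.Icc (0:ℝ) 1,
    |derivWithin f (Set.Icc (0:ℝ) 1) x - derivWithin f (Set.Icc (0:ℝ) 1) y| ≤ C * ω |x - y|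


/-!
Fixed points of `f` are neutral: at a fixed point `p` both `(fⁿ)'(p) = f'(p)ⁿ` and
`(f⁻ⁿ)'(p) = f'(p)⁻ⁿ` are at most `Γ_n(f)`, so `γ(f) = 1` forces `f'(p) = 1`.

Take an increasing orbit `x_k = fᵏ(x)` (decreasing ones are handled by conjugating with
`t ↦ 1 - t`); it stays between two fixed points `p < q` with `f(t) > t` on `(p, q)`. Write
`s_k = x_{k+1} - x_k` and `ω(δ) = 2/n`. While the steps are shorter than `δ/n`, the mean value
theorem on `[x_k - δ, x_k]` (or neutrality of `p` when `x_k - p ≤ δ`) gives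
`f'(x_k) ≤ 1 + s_k/δ + Cω(δ)`, so these factors contribute at most `e^{1+2C}`. From the first
step `s_j ≥ δ/n` on, the mean value theorem on `[x_k, x_{k+1}]` gives
`f'(x_k) ≤ (s_{k+1}/s_k)(1 + (C/m)ω(s_k))` with `m = min f'`: the ratios telescope to
`s_n/s_j ≤ n/δ`, and subadditivity of `ω` bounds `∑ ω(s_k)` by `2nω(1/n)`. The inverse `f⁻¹`
satisfies the same hypotheses, with another constant.
-/

local notation "𝕀" => Set.Icc (0:ℝ) 1

lemma one_div_natCast_mem_Icc (n : ℕ) : 1 / (n : ℝ) ∈ 𝕀 :=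
  ⟨by positivity, by simpa using Nat.cast_inv_le_one n⟩

namespace IsModCont

variable {ω : ℝ → ℝ}

lemma mono (hω : IsModCont ω) {a b : ℝ} (ha : 0 ≤ a) (hab : a ≤ b) (hb : b ≤ 1) :
    ω a ≤ ω b :=
  hω.monotoneOn ⟨ha, hab.trans hb⟩ ⟨ha.trans hab, hb⟩ hab

lemma nat_mul_le (hω : IsModCont ω) (k : ℕ) {t : ℝ} (ht : 0 ≤ t) (hkt : k * t ≤ 1) :
    ω (k * t) ≤ k * ω t := by
  induction k with
  | zero => simp [hω.map_zero]
  | succ k ih =>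
    push_cast at hkt ⊢
    have hk : (k : ℝ) * t ≤ 1 := by nlinarith
    calc ω ((k + 1) * t) = ω (k * t + t) := by ring_nf
      _ ≤ ω (k * t) + ω t := hω.subadd _ _ (by positivity) ht (by linarith)
      _ ≤ (k + 1) * ω t := by linarith [ih hk]

lemma map_one_le_nat_mul (hω : IsModCont ω) {n : ℕ} (hn : 1 ≤ n) : ω 1 ≤ n * ω (1 / n) := by
  have hn0 : (n : ℝ) ≠ 0 := by positivity
  have := hω.nat_mul_le n (t := 1 / n) (by positivity) (mul_one_div_cancel hn0).le
  rwa [mul_one_div_cancel hn0] at this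

lemma le_nat_mul (hω : IsModCont ω) {N : ℕ} {a b : ℝ} (ha : 0 ≤ a) (ha1 : a ≤ 1)
    (hb : 0 ≤ b) (hb1 : b ≤ 1) (hab : a ≤ N * b) : ω a ≤ N * ω b := by
  by_cases hNb : N * b ≤ 1
  · exact (hω.mono ha hab hNb).trans (hω.nat_mul_le N hb hNb)
  · rw [not_le] at hNb
    have hN : (0 : ℝ) < N := pos_of_mul_pos_left (one_pos.trans hNb) hb
    have hbN : 1 / (N : ℝ) ≤ b := by rw [div_le_iff₀ hN]; linarith
    calc ω a ≤ ω 1 := hω.mono ha ha1 le_rfl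
      _ ≤ N * ω (1 / N) := hω.map_one_le_nat_mul (by exact_mod_cast hN)
      _ ≤ N * ω b := by gcongr; exact hω.mono (by positivity) hbN hb1

lemma le_mul_add_one (hω : IsModCont ω) {s : ℝ} (hs0 : 0 ≤ s) (hs1 : s ≤ 1) {n : ℕ}
    (hn : 1 ≤ n) : ω s ≤ (n * s + 1) * ω (1 / n) := by
  have hn0 : (0 : ℝ) < n := by exact_mod_cast hn
  have hceil : (⌈n * s⌉₊ : ℝ) < n * s + 1 := Nat.ceil_lt_add_one (by positivity)
  calc ω s ≤ ⌈n * s⌉₊ * ω (1 / n) := by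
        refine hω.le_nat_mul hs0 hs1 (by positivity) (one_div_natCast_mem_Icc n).2 ?_
        rw [← div_eq_mul_one_div, le_div_iff₀ hn0, mul_comm]
        exact Nat.le_ceil _
    _ ≤ (n * s + 1) * ω (1 / n) := by
        gcongr
        exact hω.nonneg _ (one_div_natCast_mem_Icc n)

lemma sum_le_two_mul {ι : Type*} (hω : IsModCont ω) (s : Finset ι) {x : ι → ℝ}
    (hx : ∀ i ∈ s, 0 ≤ x i) (hsum : ∑ i ∈ s, x i ≤ 1) {n : ℕ} (hn : 1 ≤ n) (hcard : s.card ≤ n) :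
    ∑ i ∈ s, ω (x i) ≤ 2 * (n * ω (1 / n)) := by
  have hω1n : 0 ≤ ω (1 / n) := hω.nonneg _ (one_div_natCast_mem_Icc n)
  have hcard' : (s.card : ℝ) ≤ n := by exact_mod_cast hcard
  calc ∑ i ∈ s, ω (x i) ≤ ∑ i ∈ s, (n * x i + 1) * ω (1 / n) :=
        Finset.sum_le_sum fun i hi =>
          hω.le_mul_add_one (hx i hi) ((Finset.single_le_sum hx hi).trans hsum) hn
    _ = (n * ∑ i ∈ s, x i + s.card) * ω (1 / n) := by
        rw [← Finset.sum_mul, Finset.sum_add_distrib, Finset.mul_sum]; simp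
    _ ≤ (2 * n) * ω (1 / n) := by gcongr; nlinarith
    _ = 2 * (n * ω (1 / n)) := by ring

end IsModCont

section Iterates

variable {f : ℝ → ℝ}

lemma contDiffOn_iterate (hmaps : MapsTo f 𝕀 𝕀) (hcd : ContDiffOn ℝ 1 f 𝕀) (n : ℕ) :
    ContDiffOn ℝ 1 f^[n] 𝕀 := by
  induction n with
  | zero => exact contDiffOn_id
  | succ n ih => exact ih.comp hcd hmaps

lemma derivWithin_iterate (hmaps : MapsTo f 𝕀 𝕀) (hcd : ContDiffOn ℝ 1 f 𝕀) (n : ℕ)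
    {x : ℝ} (hx : x ∈ 𝕀) :
    derivWithin f^[n] 𝕀 x = ∏ k ∈ Finset.range n, derivWithin f 𝕀 (f^[k] x) := by
  induction n with
  | zero => simpa using derivWithin_id x 𝕀 (uniqueDiffOn_Icc one_pos x hx)
  | succ n ih =>
    rw [Function.iterate_succ', derivWithin_comp x
      (hcd.differentiableOn one_ne_zero _ (hmaps.iterate n hx))
      ((contDiffOn_iterate hmaps hcd n).differentiableOn one_ne_zero x hx) (hmaps.iterate n),
      ih, Finset.prod_range_succ, mul_comm]

lemma abs_derivWithin_le_supAbsDeriv (hcd : ContDiffOn ℝ 1 f 𝕀) {x : ℝ} (hx : x ∈ 𝕀) :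
    |derivWithin f 𝕀 x| ≤ supAbsDeriv f :=
  le_csSup (isCompact_Icc.image_of_continuousOn
    (hcd.continuousOn_derivWithin (uniqueDiffOn_Icc one_pos) le_rfl).abs).bddAbove
    (mem_image_of_mem _ hx)

lemma supAbsDeriv_le {B : ℝ} (h : ∀ x ∈ 𝕀, |derivWithin f 𝕀 x| ≤ B) : supAbsDeriv f ≤ B :=
  csSup_le ((nonempty_Icc.2 zero_le_one).image _) (forall_mem_image.2 h)

end Iterates

section Slopes

variable {f ω : ℝ → ℝ} {a b : ℝ}

lemma exists_derivWithin_eq_slope (hdf : DifferentiableOn ℝ f 𝕀) (ha : 0 ≤ a) (hab : a < b)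
    (hb : b ≤ 1) : ∃ c ∈ Ioo a b, derivWithin f 𝕀 c = (f b - f a) / (b - a) :=
  exists_hasDerivAt_eq_slope f (derivWithin f 𝕀) hab
    (hdf.continuousOn.mono (Icc_subset_Icc ha hb)) fun c hc =>
      (hdf c ⟨ha.trans hc.1.le, hc.2.le.trans hb⟩).hasDerivWithinAt.hasDerivAt
        (Icc_mem_nhds (ha.trans_lt hc.1) (hc.2.trans_le hb))

lemma le_slope {m : ℝ} (hdf : DifferentiableOn ℝ f 𝕀) (hm : ∀ y ∈ 𝕀, m ≤ derivWithin f 𝕀 y)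
    (ha : 0 ≤ a) (hab : a < b) (hb : b ≤ 1) : m ≤ (f b - f a) / (b - a) := by
  obtain ⟨c, hc, hslope⟩ := exists_derivWithin_eq_slope hdf ha hab hb
  exact hslope ▸ hm c ⟨ha.trans hc.1.le, hc.2.le.trans hb⟩

lemma mul_abs_sub_le {m : ℝ} (hdf : DifferentiableOn ℝ f 𝕀)
    (hm : ∀ y ∈ 𝕀, m ≤ derivWithin f 𝕀 y) (ha : a ∈ 𝕀) (hb : b ∈ 𝕀) :
    m * |a - b| ≤ |f a - f b| := by
  wlog hab : a ≤ b generalizing a b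
  · rw [abs_sub_comm, abs_sub_comm (f a)]
    exact this hb ha (le_of_not_ge hab)
  rcases hab.lt_or_eq with hab | rfl
  · have := le_slope hdf hm ha.1 hab hb.2
    rw [le_div_iff₀ (sub_pos.2 hab)] at this
    rw [abs_sub_comm, abs_of_pos (sub_pos.2 hab), abs_sub_comm]
    exact this.trans (le_abs_self _)
  · simp

lemma derivWithin_le_slope_add {C : ℝ} (hω : IsModCont ω) (hC : 0 ≤ C)
    (hdf : DifferentiableOn ℝ f 𝕀)
    (hmod : ∀ u ∈ 𝕀, ∀ v ∈ 𝕀, |derivWithin f 𝕀 u - derivWithin f 𝕀 v| ≤ C * ω |u - v|)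
    (ha : 0 ≤ a) (hab : a < b) (hb : b ≤ 1) {y : ℝ} (hy : y ∈ Icc a b) :
    derivWithin f 𝕀 y ≤ (f b - f a) / (b - a) + C * ω (b - a) := by
  obtain ⟨c, hc, hslope⟩ := exists_derivWithin_eq_slope hdf ha hab hb
  have hyc : |y - c| ≤ b - a :=
    abs_sub_le_iff.2 ⟨by linarith [hy.2, hc.1], by linarith [hy.1, hc.2]⟩
  have hφ := (abs_le.1 (hmod y ⟨ha.trans hy.1, hy.2.trans hb⟩ c
    ⟨ha.trans hc.1.le, hc.2.le.trans hb⟩)).2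
  have hωyc : ω |y - c| ≤ ω (b - a) := hω.mono (abs_nonneg _) hyc (by linarith)
  rw [← hslope]
  nlinarith

lemma derivWithin_le_slope_mul {C m : ℝ} (hω : IsModCont ω) (hC : 0 ≤ C) (hm : 0 < m)
    (hdf : DifferentiableOn ℝ f 𝕀) (hmf : ∀ y ∈ 𝕀, m ≤ derivWithin f 𝕀 y)
    (hmod : ∀ u ∈ 𝕀, ∀ v ∈ 𝕀, |derivWithin f 𝕀 u - derivWithin f 𝕀 v| ≤ C * ω |u - v|)
    (ha : 0 ≤ a) (hab : a < b) (hb : b ≤ 1) :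
    derivWithin f 𝕀 a ≤ (f b - f a) / (b - a) * (1 + C / m * ω (b - a)) := by
  have hslope := le_slope hdf hmf ha hab hb
  have hω0 : 0 ≤ ω (b - a) := hω.nonneg _ ⟨by linarith, by linarith⟩
  have hCω : C * ω (b - a) ≤ (f b - f a) / (b - a) * (C / m * ω (b - a)) := by
    rw [← mul_assoc, ← mul_div_assoc, mul_comm _ C, mul_div_assoc]
    exact mul_le_mul_of_nonneg_right (le_mul_of_one_le_right hC ((one_le_div hm).2 hslope)) hω0
  linarith [derivWithin_le_slope_add hω hC hdf hmod ha hab hb (left_mem_Icc.2 hab.le)]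

end Slopes

lemma prod_le_exp_of_le_one_add {a s : ℕ → ℝ} {c δ : ℝ} {j n : ℕ} (hδ : 0 < δ) (hc : 0 ≤ c)
    (hjn : j ≤ n) (ha : ∀ k < j, 0 ≤ a k) (hs : ∀ k < j, s k ≤ δ / n)
    (has : ∀ k < j, a k ≤ 1 + (s k / δ + c)) :
    ∏ k ∈ Finset.range j, a k ≤ Real.exp (1 + n * c) := by
  have hsum : ∑ k ∈ Finset.range j, s k / δ ≤ 1 := by
    rcases j.eq_zero_or_pos with rfl | hj
    · simp
    have hn : (0 : ℝ) < n := by exact_mod_cast hj.trans_le hjn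
    calc ∑ k ∈ Finset.range j, s k / δ ≤ ∑ _k ∈ Finset.range j, 1 / (n : ℝ) :=
          Finset.sum_le_sum fun k hk => by
            rw [div_le_iff₀ hδ, div_mul_eq_mul_div, one_mul]
            exact hs k (Finset.mem_range.1 hk)
      _ ≤ 1 := by
          rw [Finset.sum_const, Finset.card_range, nsmul_eq_mul, mul_one_div, div_le_one hn]
          exact_mod_cast hjn
  calc ∏ k ∈ Finset.range j, a k ≤ ∏ k ∈ Finset.range j, Real.exp (s k / δ + c) :=
        Finset.prod_le_prod (fun k hk => ha k (Finset.mem_range.1 hk)) fun k hk =>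
          (has k (Finset.mem_range.1 hk)).trans (by linarith [Real.add_one_le_exp (s k / δ + c)])
    _ = Real.exp (∑ k ∈ Finset.range j, s k / δ + j * c) := by
        rw [← Real.exp_sum, Finset.sum_add_distrib, Finset.sum_const, Finset.card_range,
          nsmul_eq_mul]
    _ ≤ Real.exp (1 + n * c) := by gcongr

lemma Finset.prod_Ico_div_of_pos {s : ℕ → ℝ} (hs : ∀ k, 0 < s k) {j n : ℕ} (hjn : j ≤ n) :
    ∏ k ∈ Finset.Ico j n, s (k + 1) / s k = s n / s j := by
  simpa using congrArg Units.val
    (Finset.prod_Ico_div (f := fun k => Units.mk0 (s k) (hs k).ne') hjn)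

lemma prod_Ico_le_div_mul_exp {ω : ℝ → ℝ} (hω : IsModCont ω) {a s : ℕ → ℝ} {c : ℝ} {j n : ℕ}
    (hc : 0 ≤ c) (hn : 1 ≤ n) (hjn : j ≤ n) (hs : ∀ k, 0 < s k)
    (hsum : ∑ k ∈ Finset.Ico j n, s k ≤ 1) (ha : ∀ k ∈ Finset.Ico j n, 0 ≤ a k)
    (has : ∀ k ∈ Finset.Ico j n, a k ≤ s (k + 1) / s k * (1 + c * ω (s k))) :
    ∏ k ∈ Finset.Ico j n, a k ≤ s n / s j * Real.exp (2 * c * (n * ω (1 / n))) := by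
  calc ∏ k ∈ Finset.Ico j n, a k
      ≤ ∏ k ∈ Finset.Ico j n, (s (k + 1) / s k * Real.exp (c * ω (s k))) := by
        refine Finset.prod_le_prod ha fun k hk => (has k hk).trans ?_
        gcongr
        · exact (div_pos (hs _) (hs _)).le
        · linarith [Real.add_one_le_exp (c * ω (s k))]
    _ = s n / s j * Real.exp (c * ∑ k ∈ Finset.Ico j n, ω (s k)) := by
        rw [Finset.prod_mul_distrib, Finset.prod_Ico_div_of_pos hs hjn, Finset.mul_sum,
          Real.exp_sum]
    _ ≤ s n / s j * Real.exp (2 * c * (n * ω (1 / n))) := by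
        refine mul_le_mul_of_nonneg_left (Real.exp_le_exp.2 ?_) (div_pos (hs _) (hs _)).le
        exact (mul_le_mul_of_nonneg_left
          (hω.sum_le_two_mul _ (fun k _ => (hs k).le) hsum hn (by simp)) hc).trans_eq (by ring)

lemma prod_le_div_mul_exp_of_step_bounds {ω : ℝ → ℝ} (hω : IsModCont ω) {a s : ℕ → ℝ}
    {c c' δ : ℝ} {n : ℕ} (hn : 1 ≤ n) (hδ : 0 < δ) (hδ1 : δ ≤ 1) (hc : 0 ≤ c) (hc' : 0 ≤ c')
    (hs : ∀ k, 0 < s k) (hsum : ∑ k ∈ Finset.range (n + 1), s k ≤ 1) (ha : ∀ k, 0 ≤ a k)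
    (hshort : ∀ k, a k ≤ 1 + (s k / δ + c))
    (hlong : ∀ k, a k ≤ s (k + 1) / s k * (1 + c' * ω (s k))) :
    ∏ k ∈ Finset.range n, a k ≤ n / δ * Real.exp (1 + n * c + 2 * c' * (n * ω (1 / n))) := by
  have hP : ∃ k, n ≤ k ∨ δ / n ≤ s k := ⟨n, Or.inl le_rfl⟩
  let j := Nat.find hP
  have hjn : j ≤ n := Nat.find_min' _ (Or.inl le_rfl)
  have hhead : ∏ k ∈ Finset.range j, a k ≤ Real.exp (1 + n * c) :=
    prod_le_exp_of_le_one_add hδ hc hjn (fun k _ => ha k)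
      (fun k hk => (not_le.1 (not_or.1 (Nat.find_min _ hk)).2).le) fun k _ => hshort k
  have hsub : ∀ t ⊆ Finset.range (n + 1), ∑ k ∈ t, s k ≤ 1 := fun t ht =>
    (Finset.sum_le_sum_of_subset_of_nonneg ht fun k _ _ => (hs k).le).trans hsum
  have htail : ∏ k ∈ Finset.Ico j n, a k ≤ s n / s j * Real.exp (2 * c' * (n * ω (1 / n))) :=
    prod_Ico_le_div_mul_exp hω hc' hn hjn hs
      (hsub _ fun k hk => Finset.mem_range.2 (by rw [Finset.mem_Ico] at hk; omega))
      (fun k _ => ha k) fun k _ => hlong k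
  have hratio : s n / s j ≤ n / δ := by
    have hsn : s n ≤ 1 := by simpa using hsub {n} (by simp)
    rcases Nat.find_spec hP with hj | hj
    · rw [le_antisymm hjn hj, div_self (hs n).ne', le_div_iff₀ hδ, one_mul]
      exact hδ1.trans (by exact_mod_cast hn)
    · calc s n / s j ≤ 1 / (δ / n) := div_le_div₀ zero_le_one hsn (by positivity) hj
        _ = n / δ := one_div_div _ _
  rw [← Finset.prod_range_mul_prod_Ico _ hjn]
  calc _ ≤ Real.exp (1 + n * c) * (n / δ * Real.exp (2 * c' * (n * ω (1 / n)))) := by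
        refine mul_le_mul hhead (htail.trans ?_) (Finset.prod_nonneg fun k _ => ha k)
          (Real.exp_pos _).le
        gcongr
    _ = n / δ * Real.exp (1 + n * c + 2 * c' * (n * ω (1 / n))) := by
        rw [Real.exp_add (1 + _)]; ring

lemma exists_isFixedPt_lt_apply_on_Ioo {f : ℝ → ℝ} (hcf : ContinuousOn f 𝕀) (hf0 : f 0 = 0)
    (hf1 : f 1 = 1) {x : ℝ} (hx : x ∈ 𝕀) (hxf : x < f x) :
    ∃ p q, p ∈ 𝕀 ∧ q ∈ 𝕀 ∧ Function.IsFixedPt f p ∧ Function.IsFixedPt f q ∧ p < x ∧ x < q ∧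
      ∀ t ∈ Ioo p q, t < f t := by
  have hD : ContinuousOn (fun t => f t - t) 𝕀 := hcf.sub continuousOn_id
  have hcompact : ∀ a b, 0 ≤ a → b ≤ 1 → IsCompact (Icc a b ∩ (fun t => f t - t) ⁻¹' {0}) :=
    fun a b ha hb => isCompact_Icc.of_isClosed_subset
      ((hD.mono (Icc_subset_Icc ha hb)).preimage_isClosed_of_isClosed isClosed_Icc
        isClosed_singleton) inter_subset_left
  obtain ⟨p, ⟨hp, hfp⟩, hpmax⟩ :=
    (hcompact 0 x le_rfl hx.2).exists_isGreatest ⟨0, ⟨le_rfl, hx.1⟩, by simp [hf0]⟩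
  obtain ⟨q, ⟨hq, hfq⟩, hqmin⟩ :=
    (hcompact x 1 hx.1 le_rfl).exists_isLeast ⟨1, ⟨hx.2, le_rfl⟩, by simp [hf1]⟩
  simp only [mem_preimage, mem_singleton_iff, sub_eq_zero] at hfp hfq
  have hpx : p < x := hp.2.lt_of_ne fun h => by rw [h] at hfp; linarith
  have hxq : x < q := hq.1.lt_of_ne' fun h => by rw [h] at hfq; linarith
  refine ⟨p, q, ⟨hp.1, hpx.le.trans hx.2⟩, ⟨hx.1.trans hxq.le, hq.2⟩, hfp, hfq, hpx, hxq,
    fun t ht => not_le.1 fun hft => ?_⟩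
  rcases le_total t x with htx | hxt
  · obtain ⟨z, hz, hfz⟩ := intermediate_value_Icc htx
      (hD.mono (Icc_subset_Icc (hp.1.trans ht.1.le) hx.2))
      (show (0 : ℝ) ∈ Icc (f t - t) (f x - x) from ⟨by linarith, by linarith⟩)
    linarith [hpmax ⟨⟨hp.1.trans (ht.1.le.trans hz.1), hz.2⟩, hfz⟩, hz.1, ht.1]
  · obtain ⟨z, hz, hfz⟩ := intermediate_value_Icc' hxt
      (hD.mono (Icc_subset_Icc hx.1 (ht.2.le.trans hq.2)))
      (show (0 : ℝ) ∈ Icc (f t - t) (f x - x) from ⟨by linarith, by linarith⟩)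
    linarith [hqmin ⟨⟨hz.1, hz.2.trans (ht.2.le.trans hq.2)⟩, hfz⟩, hz.2, ht.2]

section Reflection

variable {f : ℝ → ℝ}

lemma derivWithin_reflect (hdf : DifferentiableOn ℝ f 𝕀) {y : ℝ} (hy : y ∈ 𝕀) :
    derivWithin (fun t => 1 - f (1 - t)) 𝕀 y = derivWithin f 𝕀 (1 - y) := by
  have hR : HasDerivWithinAt (fun t : ℝ => 1 - t) (-1) 𝕀 y := by
    simpa using (hasDerivWithinAt_id y 𝕀).const_sub (1 : ℝ)
  have : HasDerivWithinAt (fun t => 1 - f (1 - t)) (-(derivWithin f 𝕀 (1 - y) * -1)) 𝕀 y :=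
    ((hdf _ (Icc.mem_iff_one_sub_mem.1 hy)).hasDerivWithinAt.comp y hR
      fun t ht => Icc.mem_iff_one_sub_mem.1 ht).const_sub 1
  rw [this.derivWithin (uniqueDiffOn_Icc one_pos y hy)]
  ring

lemma iterate_reflect (f : ℝ → ℝ) (k : ℕ) (x : ℝ) :
    (fun t => 1 - f (1 - t))^[k] (1 - x) = 1 - f^[k] x := by
  induction k with
  | zero => rfl
  | succ k ih => simp [Function.iterate_succ_apply', ih]

end Reflection

structure IsNeutralOmegaMap (ω : ℝ → ℝ) (C m : ℝ) (f : ℝ → ℝ) : Prop where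
  mapsTo : MapsTo f 𝕀 𝕀
  contDiffOn : ContDiffOn ℝ 1 f 𝕀
  map_zero : f 0 = 0
  map_one : f 1 = 1
  nonneg : 0 ≤ C
  pos : 0 < m
  le_derivWithin : ∀ y ∈ 𝕀, m ≤ derivWithin f 𝕀 y
  abs_derivWithin_sub_le :
    ∀ u ∈ 𝕀, ∀ v ∈ 𝕀, |derivWithin f 𝕀 u - derivWithin f 𝕀 v| ≤ C * ω |u - v|
  derivWithin_eq_one : ∀ p ∈ 𝕀, Function.IsFixedPt f p → derivWithin f 𝕀 p = 1

namespace IsNeutralOmegaMap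

variable {ω f : ℝ → ℝ} {C m : ℝ}

lemma differentiableOn (hf : IsNeutralOmegaMap ω C m f) : DifferentiableOn ℝ f 𝕀 :=
  hf.contDiffOn.differentiableOn one_ne_zero

lemma strictMonoOn (hf : IsNeutralOmegaMap ω C m f) : StrictMonoOn f 𝕀 := fun a ha b hb hab => by
  have := hf.pos.trans_le (le_slope hf.differentiableOn hf.le_derivWithin ha.1 hab hb.2)
  rwa [div_pos_iff_of_pos_right (sub_pos.2 hab), sub_pos] at this

lemma mapsTo_Ioo (hf : IsNeutralOmegaMap ω C m f) {p q : ℝ} (hp : p ∈ 𝕀) (hq : q ∈ 𝕀)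
    (hfp : Function.IsFixedPt f p) (hfq : Function.IsFixedPt f q) : MapsTo f (Ioo p q) (Ioo p q) :=
  fun t ht => by
    have htI : t ∈ 𝕀 := ⟨hp.1.trans ht.1.le, ht.2.le.trans hq.2⟩
    exact ⟨hfp.eq ▸ hf.strictMonoOn hp htI ht.1, hfq.eq ▸ hf.strictMonoOn htI hq ht.2⟩

lemma derivWithin_le_one_add (hf : IsNeutralOmegaMap ω C m f) (hω : IsModCont ω) {p y δ : ℝ}
    (hp : p ∈ 𝕀) (hfp : Function.IsFixedPt f p) (hy : y ∈ 𝕀) (hpy : p < y)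
    (hD : ∀ t ∈ Ioc p y, t < f t) (hδ : 0 < δ) (hδ1 : δ ≤ 1) :
    derivWithin f 𝕀 y ≤ 1 + ((f y - y) / δ + C * ω δ) := by
  have hDy : 0 ≤ (f y - y) / δ := div_nonneg (by linarith [hD y ⟨hpy, le_rfl⟩]) hδ.le
  rcases le_or_gt (y - p) δ with hclose | hfar
  · have h := (abs_le.1 (hf.abs_derivWithin_sub_le y hy p hp)).2
    rw [hf.derivWithin_eq_one p hp hfp, abs_of_pos (sub_pos.2 hpy)] at h
    have := mul_le_mul_of_nonneg_left (hω.mono (sub_pos.2 hpy).le hclose hδ1) hf.nonneg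
    linarith
  · have hslope := derivWithin_le_slope_add hω hf.nonneg hf.differentiableOn
      hf.abs_derivWithin_sub_le (by linarith [hp.1]) (sub_lt_self y hδ) hy.2
      (right_mem_Icc.2 (sub_le_self y hδ.le))
    rw [sub_sub_cancel] at hslope
    have hdisp : f y - f (y - δ) ≤ f y - y + δ := by
      linarith [hD (y - δ) ⟨by linarith, by linarith⟩]
    have : (f y - f (y - δ)) / δ ≤ 1 + (f y - y) / δ := by
      rw [div_le_iff₀ hδ, add_mul, div_mul_cancel₀ _ hδ.ne']; linarith
    linarith

lemma prod_derivWithin_orbit_le_of_lt (hf : IsNeutralOmegaMap ω C m f) (hω : IsModCont ω)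
    {n : ℕ} (hn : 1 ≤ n) {δ : ℝ} (hδ : 0 < δ) (hδ1 : δ ≤ 1) {x : ℝ} (hx : x ∈ 𝕀)
    (hxf : x < f x) :
    ∏ k ∈ Finset.range n, derivWithin f 𝕀 (f^[k] x)
      ≤ n / δ * Real.exp (1 + n * (C * ω δ) + 2 * (C / m) * (n * ω (1 / n))) := by
  obtain ⟨p, q, hp, hq, hfp, hfq, hpx, hxq, hD⟩ :=
    exists_isFixedPt_lt_apply_on_Ioo hf.contDiffOn.continuousOn hf.map_zero hf.map_one hx hxf
  set X : ℕ → ℝ := fun k => f^[k] x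
  set s : ℕ → ℝ := fun k => X (k + 1) - X k with hsdef
  have hXsucc : ∀ k, X (k + 1) = f (X k) := fun k => Function.iterate_succ_apply' f k x
  have hX : ∀ k, X k ∈ Ioo p q := fun k => (hf.mapsTo_Ioo hp hq hfp hfq).iterate k ⟨hpx, hxq⟩
  have hXI : ∀ k, X k ∈ 𝕀 := fun k => ⟨hp.1.trans (hX k).1.le, (hX k).2.le.trans hq.2⟩
  have hs : ∀ k, 0 < s k := fun k => by
    simp only [hsdef, hXsucc, sub_pos]; exact hD _ (hX k)
  refine prod_le_div_mul_exp_of_step_bounds hω hn hδ hδ1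
    (mul_nonneg hf.nonneg (hω.nonneg δ ⟨hδ.le, hδ1⟩)) (div_nonneg hf.nonneg hf.pos.le) hs ?_
    (fun k => hf.pos.le.trans (hf.le_derivWithin _ (hXI k))) (fun k => ?_) fun k => ?_
  · rw [Finset.sum_range_sub X]
    linarith [(hXI (n + 1)).2, (hXI 0).1]
  · have := hf.derivWithin_le_one_add hω hp hfp (hXI k) (hX k).1
      (fun t ht => hD t ⟨ht.1, ht.2.trans_lt (hX k).2⟩) hδ hδ1
    rwa [← hXsucc] at this
  · have := derivWithin_le_slope_mul hω hf.nonneg hf.pos hf.differentiableOn hf.le_derivWithin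
      hf.abs_derivWithin_sub_le (hXI k).1 (sub_pos.1 (hs k)) (hXI (k + 1)).2
    rwa [← hXsucc, ← hXsucc] at this

lemma reflect (hf : IsNeutralOmegaMap ω C m f) :
    IsNeutralOmegaMap ω C m (fun t => 1 - f (1 - t)) where
  mapsTo t ht := Icc.mem_iff_one_sub_mem.1 (hf.mapsTo (Icc.mem_iff_one_sub_mem.1 ht))
  contDiffOn := (contDiff_const.sub contDiff_id).contDiffOn.comp
    (hf.contDiffOn.comp (contDiff_const.sub contDiff_id).contDiffOn
      fun t ht => Icc.mem_iff_one_sub_mem.1 ht) fun t ht => hf.mapsTo (Icc.mem_iff_one_sub_mem.1 ht)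
  map_zero := by simp [hf.map_one]
  map_one := by simp [hf.map_zero]
  nonneg := hf.nonneg
  pos := hf.pos
  le_derivWithin y hy := by
    rw [derivWithin_reflect hf.differentiableOn hy]
    exact hf.le_derivWithin _ (Icc.mem_iff_one_sub_mem.1 hy)
  abs_derivWithin_sub_le u hu v hv := by
    rw [derivWithin_reflect hf.differentiableOn hu, derivWithin_reflect hf.differentiableOn hv,
      ← abs_sub_comm, show u - v = (1 - v) - (1 - u) by ring]
    exact hf.abs_derivWithin_sub_le _ (Icc.mem_iff_one_sub_mem.1 hv) _
      (Icc.mem_iff_one_sub_mem.1 hu)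
  derivWithin_eq_one p hp hfp := by
    rw [derivWithin_reflect hf.differentiableOn hp]
    exact hf.derivWithin_eq_one _ (Icc.mem_iff_one_sub_mem.1 hp) (by
      have : 1 - f (1 - p) = p := hfp
      simp only [Function.IsFixedPt]; linarith)

lemma prod_derivWithin_orbit_le (hf : IsNeutralOmegaMap ω C m f) (hω : IsModCont ω)
    {n : ℕ} (hn : 1 ≤ n) {δ : ℝ} (hδ : 0 < δ) (hδ1 : δ ≤ 1) {x : ℝ} (hx : x ∈ 𝕀) :
    ∏ k ∈ Finset.range n, derivWithin f 𝕀 (f^[k] x)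
      ≤ n / δ * Real.exp (1 + n * (C * ω δ) + 2 * (C / m) * (n * ω (1 / n))) := by
  rcases lt_trichotomy x (f x) with hxf | hxf | hxf
  · exact hf.prod_derivWithin_orbit_le_of_lt hω hn hδ hδ1 hx hxf
  · have hfix : Function.IsFixedPt f x := hxf.symm
    rw [Finset.prod_eq_one fun k _ => by rw [(hfix.iterate k).eq, hf.derivWithin_eq_one x hx hfix]]
    refine one_le_mul_of_one_le_of_one_le ?_ (Real.one_le_exp ?_)
    · rw [le_div_iff₀ hδ, one_mul]; exact hδ1.trans (by exact_mod_cast hn)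
    · have := hf.nonneg
      have := hf.pos
      have := hω.nonneg δ ⟨hδ.le, hδ1⟩
      have := hω.nonneg _ (one_div_natCast_mem_Icc n)
      positivity
  · have h := hf.reflect.prod_derivWithin_orbit_le_of_lt hω hn hδ hδ1
      (Icc.mem_iff_one_sub_mem.1 hx) (by simpa using hxf)
    refine (Finset.prod_congr rfl fun k _ => ?_).trans_le h
    rw [iterate_reflect, derivWithin_reflect hf.differentiableOn
      (Icc.mem_iff_one_sub_mem.1 (hf.mapsTo.iterate k hx)), sub_sub_cancel]

lemma supAbsDeriv_iterate_le (hf : IsNeutralOmegaMap ω C m f) (hω : IsModCont ω) {n : ℕ}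
    (hn : 1 ≤ n) {δ : ℝ} (hδ : 0 < δ) (hδ1 : δ ≤ 1) :
    supAbsDeriv f^[n] ≤ n / δ * Real.exp (1 + n * (C * ω δ) + 2 * (C / m) * (n * ω (1 / n))) := by
  refine supAbsDeriv_le fun x hx => ?_
  rw [derivWithin_iterate hf.mapsTo hf.contDiffOn n hx, abs_of_nonneg (Finset.prod_nonneg
    fun k _ => hf.pos.le.trans (hf.le_derivWithin _ (hf.mapsTo.iterate k hx)))]
  exact hf.prod_derivWithin_orbit_le hω hn hδ hδ1 hx

end IsNeutralOmegaMap

lemma le_one_of_pow_le {a : ℝ} {u : ℕ → ℝ} (ha : 0 ≤ a) (h : ∀ n, a ^ n ≤ u n)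
    (hu : Tendsto (fun n : ℕ => u n ^ (1 / (n : ℝ))) atTop (nhds 1)) : a ≤ 1 := by
  refine ge_of_tendsto hu ((eventually_ge_atTop 1).mono fun n hn => ?_)
  have hn0 : (n : ℝ) ≠ 0 := by positivity
  calc a = (a ^ n) ^ (1 / (n : ℝ)) := by
        rw [← Real.rpow_natCast, ← Real.rpow_mul ha, mul_one_div_cancel hn0, Real.rpow_one]
    _ ≤ u n ^ (1 / (n : ℝ)) := Real.rpow_le_rpow (by positivity) (h n) (by positivity)

lemma Gamma_comm (f g : ℝ → ℝ) (n : ℕ) : Gamma f g n = Gamma g f n := max_comm _ _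

lemma GammaEqOne.symm {f g : ℝ → ℝ} (hγ : GammaEqOne f g) : GammaEqOne g f := by
  simpa only [GammaEqOne, Gamma_comm g f] using hγ

namespace IsDiff01

variable {ω f g : ℝ → ℝ}

lemma derivWithin_inv (hf : IsDiff01 f g) {u : ℝ} (hu : u ∈ 𝕀) :
    derivWithin g 𝕀 u = (derivWithin f 𝕀 (g u))⁻¹ := by
  refine eq_inv_of_mul_eq_one_right (a := derivWithin f 𝕀 (g u)) ?_
  rw [← derivWithin_comp u (hf.contDiffOn.differentiableOn one_ne_zero _ (hf.inv_mapsTo hu))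
    (hf.inv_contDiffOn.differentiableOn one_ne_zero u hu) hf.inv_mapsTo,
    derivWithin_congr (f₁ := f ∘ g) (f := id) hf.right_inv (hf.right_inv u hu),
    derivWithin_id u 𝕀 (uniqueDiffOn_Icc one_pos u hu)]

lemma symm (hf : IsDiff01 f g) : IsDiff01 g f where
  mapsTo := hf.inv_mapsTo
  inv_mapsTo := hf.mapsTo
  left_inv := hf.right_inv
  right_inv := hf.left_inv
  map_zero := by
    simpa [hf.map_zero] using hf.left_inv 0 (left_mem_Icc.2 zero_le_one)
  map_one := by
    simpa [hf.map_one] using hf.left_inv 1 (right_mem_Icc.2 zero_le_one)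
  contDiffOn := hf.inv_contDiffOn
  inv_contDiffOn := hf.contDiffOn
  deriv_pos u hu := by
    rw [hf.derivWithin_inv hu]
    exact inv_pos.2 (hf.deriv_pos _ (hf.inv_mapsTo hu))

lemma pow_derivWithin_le_Gamma (hf : IsDiff01 f g) {p : ℝ} (hp : p ∈ 𝕀)
    (hfp : Function.IsFixedPt f p) (n : ℕ) : derivWithin f 𝕀 p ^ n ≤ Gamma f g n := by
  have h := abs_derivWithin_le_supAbsDeriv (contDiffOn_iterate hf.mapsTo hf.contDiffOn n) hp
  rw [derivWithin_iterate hf.mapsTo hf.contDiffOn n hp,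
    Finset.prod_congr rfl fun k _ => by rw [(hfp.iterate k).eq], Finset.prod_const,
    Finset.card_range] at h
  exact (le_abs_self _).trans (h.trans (le_max_left _ _))

lemma derivWithin_eq_one_of_isFixedPt (hf : IsDiff01 f g) (hγ : GammaEqOne f g) {p : ℝ}
    (hp : p ∈ 𝕀) (hfp : Function.IsFixedPt f p) : derivWithin f 𝕀 p = 1 := by
  have hpos := hf.deriv_pos p hp
  have hgp : Function.IsFixedPt g p := by
    have := hf.left_inv p hp
    rwa [hfp.eq] at this
  have hle : derivWithin f 𝕀 p ≤ 1 :=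
    le_one_of_pow_le hpos.le (hf.pow_derivWithin_le_Gamma hp hfp) hγ
  have hinv_le : (derivWithin f 𝕀 p)⁻¹ ≤ 1 := by
    refine le_one_of_pow_le (inv_nonneg.2 hpos.le) (fun n => ?_) hγ
    have := hf.symm.pow_derivWithin_le_Gamma hp hgp n
    rwa [hf.derivWithin_inv hp, hgp.eq, Gamma_comm] at this
  exact le_antisymm hle ((inv_le_one₀ hpos).1 hinv_le)

lemma exists_pos_le_derivWithin (hf : IsDiff01 f g) :
    ∃ m > 0, ∀ y ∈ 𝕀, m ≤ derivWithin f 𝕀 y := by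
  obtain ⟨y₀, hy₀, hmin⟩ := isCompact_Icc.exists_isMinOn (nonempty_Icc.2 zero_le_one)
    (hf.contDiffOn.continuousOn_derivWithin (uniqueDiffOn_Icc one_pos) le_rfl)
  exact ⟨_, hf.deriv_pos y₀ hy₀, fun y hy => hmin hy⟩

lemma Gamma_pos (hf : IsDiff01 f g) (n : ℕ) : 0 < Gamma f g n := by
  have h0 : (0 : ℝ) ∈ 𝕀 := left_mem_Icc.2 zero_le_one
  have h := abs_derivWithin_le_supAbsDeriv (contDiffOn_iterate hf.mapsTo hf.contDiffOn n) h0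
  rw [derivWithin_iterate hf.mapsTo hf.contDiffOn n h0] at h
  exact (abs_pos.2 (Finset.prod_pos fun k _ =>
    hf.deriv_pos _ (hf.mapsTo.iterate k h0)).ne').trans_le (h.trans (le_max_left _ _))

lemma isNeutralOmegaMap (hf : IsDiff01 f g) (hfω : InDiffOmega ω f) (hγ : GammaEqOne f g) :
    ∃ C m, IsNeutralOmegaMap ω C m f := by
  obtain ⟨C, hC, hmod⟩ := hfω
  obtain ⟨m, hm, hmf⟩ := hf.exists_pos_le_derivWithin
  exact ⟨C, m, hf.mapsTo, hf.contDiffOn, hf.map_zero, hf.map_one, hC.le, hm, hmf, hmod,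
    fun p hp hfp => hf.derivWithin_eq_one_of_isFixedPt hγ hp hfp⟩

lemma inDiffOmega_symm (hω : IsModCont ω) (hf : IsDiff01 f g) (hfω : InDiffOmega ω f) :
    InDiffOmega ω g := by
  obtain ⟨C, hC, hmod⟩ := hfω
  obtain ⟨m, hm, hmf⟩ := hf.exists_pos_le_derivWithin
  have hlip : ∀ u ∈ 𝕀, ∀ v ∈ 𝕀, |g u - g v| ≤ ⌈1 / m⌉₊ * |u - v| := fun u hu v hv => by
    have := mul_abs_sub_le (hf.contDiffOn.differentiableOn one_ne_zero) hmf (hf.inv_mapsTo hu)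
      (hf.inv_mapsTo hv)
    rw [hf.right_inv u hu, hf.right_inv v hv, ← le_div_iff₀' hm, div_eq_mul_one_div,
      mul_comm] at this
    exact this.trans (mul_le_mul_of_nonneg_right (Nat.le_ceil _) (abs_nonneg _))
  refine ⟨C * ⌈1 / m⌉₊ / m ^ 2, by positivity, fun u hu v hv => ?_⟩
  have hgu := hf.inv_mapsTo hu
  have hgv := hf.inv_mapsTo hv
  have hpu := hf.deriv_pos _ hgu
  have hpv := hf.deriv_pos _ hgv
  rw [hf.derivWithin_inv hu, hf.derivWithin_inv hv, inv_sub_inv hpu.ne' hpv.ne', abs_div,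
    abs_of_pos (mul_pos hpu hpv), abs_sub_comm]
  have hω' : ω |g u - g v| ≤ ⌈1 / m⌉₊ * ω |u - v| :=
    hω.le_nat_mul (abs_nonneg _) (Real.dist_le_of_mem_Icc_01 hgu hgv) (abs_nonneg _)
      (Real.dist_le_of_mem_Icc_01 hu hv) (hlip u hu v hv)
  have hmod' := (hmod _ hgu _ hgv).trans (mul_le_mul_of_nonneg_left hω' hC.le)
  calc _ ≤ C * (⌈1 / m⌉₊ * ω |u - v|) / m ^ 2 :=
        div_le_div₀ ((abs_nonneg _).trans hmod') hmod' (by positivity)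
          (sq m ▸ mul_le_mul (hmf _ hgu) (hmf _ hgv) hm.le hpu.le)
    _ = C * ⌈1 / m⌉₊ / m ^ 2 * ω |u - v| := by ring

lemma exists_supAbsDeriv_iterate_le (hω : IsModCont ω) (hω1 : 0 < ω 1) (hf : IsDiff01 f g)
    (hfω : InDiffOmega ω f) (hγ : GammaEqOne f g) :
    ∃ K > 0, ∀ n : ℕ, 1 ≤ n → ∀ δ ∈ Ioc (0 : ℝ) 1, ω δ = 2 / n →
      supAbsDeriv f^[n] ≤ n / δ * Real.exp (K * (n * ω (1 / n))) := by
  obtain ⟨C, m, hN⟩ := hf.isNeutralOmegaMap hfω hγ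
  have hC := hN.nonneg
  have hm := hN.pos
  refine ⟨(1 + 2 * C) / ω 1 + 2 * (C / m), by positivity, fun n hn δ hδ hωδ => ?_⟩
  refine (hN.supAbsDeriv_iterate_le hω hn hδ.1 hδ.2).trans
    (mul_le_mul_of_nonneg_left (Real.exp_le_exp.2 ?_) (div_pos (by positivity) hδ.1).le)
  have : 1 + 2 * C ≤ (1 + 2 * C) / ω 1 * (n * ω (1 / n)) := by
    rw [div_mul_eq_mul_div, le_div_iff₀ hω1]
    exact mul_le_mul_of_nonneg_left (hω.map_one_le_nat_mul hn) (by positivity)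
  rw [hωδ, show (n : ℝ) * (C * (2 / n)) = 2 * C by field_simp, add_mul]
  linarith

end IsDiff01

theorem growth_gap_modulus_general (ω : ℝ → ℝ) (hω : IsModCont ω)
    (winv : ℝ → ℝ) (hwinv : ∀ x ∈ Set.Icc (0:ℝ) 1, winv (ω x) = x)
    (f g : ℝ → ℝ) (hf : IsDiff01 f g) (hfω : InDiffOmega ω f) (hγ : GammaEqOne f g) :
    ∃ C > 0, ∀ n : ℕ, 1 ≤ n → 2 / (n:ℝ) ≤ ω 1 →
      Real.log (Gamma f g n)
        ≤ Real.log ((n:ℝ) / winv (2 / (n:ℝ))) + C * n * ω (1 / (n:ℝ)) := by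
  rcases le_or_gt (ω 1) 0 with hω1 | hω1
  · exact ⟨1, one_pos, fun n hn h2n => absurd (h2n.trans hω1) (not_le.2 (by positivity))⟩
  obtain ⟨Kf, hKf, hbf⟩ := hf.exists_supAbsDeriv_iterate_le hω hω1 hfω hγ
  obtain ⟨Kg, -, hbg⟩ :=
    hf.symm.exists_supAbsDeriv_iterate_le hω hω1 (hf.inDiffOmega_symm hω hfω) hγ.symm
  refine ⟨max Kf Kg, lt_max_of_lt_left hKf, fun n hn h2n => ?_⟩
  obtain ⟨δ, hδ, hωδ⟩ := intermediate_value_Icc zero_le_one hω.continuousOn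
    ⟨hω.map_zero.symm ▸ (by positivity), h2n⟩
  have hδ0 : 0 < δ := hδ.1.lt_of_ne fun h => by
    rw [← h, hω.map_zero] at hωδ; exact (by positivity : (0 : ℝ) < 2 / n).ne hωδ
  have ht : 0 ≤ n * ω (1 / n) := hω1.le.trans (hω.map_one_le_nat_mul hn)
  have hΓ : Gamma f g n ≤ n / δ * Real.exp (max Kf Kg * (n * ω (1 / n))) := by
    refine max_le ((hbf n hn δ ⟨hδ0, hδ.2⟩ hωδ).trans ?_) ((hbg n hn δ ⟨hδ0, hδ.2⟩ hωδ).trans ?_)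
    all_goals gcongr
    exacts [le_max_left _ _, le_max_right _ _]
  rw [← hωδ, hwinv δ hδ]
  calc Real.log (Gamma f g n) ≤ Real.log (n / δ * Real.exp (max Kf Kg * (n * ω (1 / n)))) :=
        Real.log_le_log (hf.Gamma_pos n) hΓ
    _ = Real.log (n / δ) + max Kf Kg * n * ω (1 / n) := by
        rw [Real.log_mul (by positivity) (Real.exp_pos _).ne', Real.log_exp, mul_assoc]

/-- **Theorem 4.** Let `ω` be a strictly increasing modulus of continuity with inverse
`winv`. Then for every `f ∈ Diff₀^ω[0,1]` with `γ(f) = 1` there is `C(f) > 0` such that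
`log Γ_n(f) ≤ log (n / ω⁻¹(2/n)) + C(f) · n · ω(1/n)` whenever `2/n ≤ ω(1)`. -/
theorem growth_gap_modulus (ω : ℝ → ℝ) (hω : IsModCont ω)
    (hsm : StrictMonoOn ω (Set.Icc (0:ℝ) 1))
    (winv : ℝ → ℝ) (hwinv : ∀ x ∈ Set.Icc (0:ℝ) 1, winv (ω x) = x)
    (f g : ℝ → ℝ) (hf : IsDiff01 f g) (hfω : InDiffOmega ω f) (hγ : GammaEqOne f g) :
    ∃ C > 0, ∀ n : ℕ, 1 ≤ n → 2 / (n:ℝ) ≤ ω 1 →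
      Real.log (Gamma f g n)
        ≤ Real.log ((n:ℝ) / winv (2 / (n:ℝ))) + C * n * ω (1 / (n:ℝ)) :=
  growth_gap_modulus_general ω hω winv hwinv f g hf hfω hγ
end

section
/- For every modulus of continuity ω : [0,1] → [0,∞) there exists a concave modulus of continuity ω* : [0,1] → [0,∞) such that ω(x) ≤ ω*(x) ≤ 2·ω(x) for all x ∈ [0,1]. -/
open Set Filter

/-! The concave majorant is the infimum of the nondecreasing affine majorants of `ω`, so it is
concave, monotone and `≥ ω`. The bound by `2ω` comes from the single affine majorant
`t ↦ ω x + (ω x / x) t`: by subadditivity, `ω t ≤ ⌈t / x⌉ ω x ≤ (t / x + 1) ω x`. Concavity with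
value `0` at `0` gives subadditivity, and subadditivity with monotonicity gives
`|ω* y - ω* x| ≤ ω* |y - x| ≤ 2 ω |y - x|`, hence continuity. -/

open Topology

section Majorant

variable {ω : ℝ → ℝ} {x : ℝ}

def affineMajorants (ω : ℝ → ℝ) : Set (ℝ × ℝ) :=
  {p | 0 ≤ p.1 ∧ ∀ t ∈ Icc (0:ℝ) 1, ω t ≤ p.1 * t + p.2}

noncomputable def concaveMajorant (ω : ℝ → ℝ) (x : ℝ) : ℝ :=
  sInf ((fun p : ℝ × ℝ => p.1 * x + p.2) '' affineMajorants ω)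

lemma affineMajorants_nonempty_of_monotoneOn (h : MonotoneOn ω (Icc 0 1)) :
    (affineMajorants ω).Nonempty :=
  ⟨(0, ω 1), le_rfl, fun t ht => by simpa using h ht (right_mem_Icc.2 zero_le_one) ht.2⟩

lemma bddBelow_image_affineMajorants (hx : x ∈ Icc (0:ℝ) 1) :
    BddBelow ((fun p : ℝ × ℝ => p.1 * x + p.2) '' affineMajorants ω) :=
  ⟨ω x, by rintro _ ⟨p, hp, rfl⟩; exact hp.2 x hx⟩

lemma concaveMajorant_le (hx : x ∈ Icc (0:ℝ) 1) {p : ℝ × ℝ} (hp : p ∈ affineMajorants ω) :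
    concaveMajorant ω x ≤ p.1 * x + p.2 :=
  csInf_le (bddBelow_image_affineMajorants hx) ⟨p, hp, rfl⟩

lemma le_concaveMajorant (hS : (affineMajorants ω).Nonempty) (hx : x ∈ Icc (0:ℝ) 1) :
    ω x ≤ concaveMajorant ω x :=
  le_csInf (hS.image _) (by rintro _ ⟨p, hp, rfl⟩; exact hp.2 x hx)

lemma concaveOn_concaveMajorant (hS : (affineMajorants ω).Nonempty) :
    ConcaveOn ℝ (Icc 0 1) (concaveMajorant ω) := by
  refine ⟨convex_Icc 0 1, fun x hx y hy a b ha hb hab => le_csInf (hS.image _) ?_⟩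
  rintro _ ⟨p, hp, rfl⟩
  have hpx := mul_le_mul_of_nonneg_left (concaveMajorant_le hx hp) ha
  have hpy := mul_le_mul_of_nonneg_left (concaveMajorant_le hy hp) hb
  calc a • concaveMajorant ω x + b • concaveMajorant ω y
      ≤ a * (p.1 * x + p.2) + b * (p.1 * y + p.2) := by simp only [smul_eq_mul]; linarith
    _ = p.1 * (a • x + b • y) + p.2 := by simp only [smul_eq_mul]; linear_combination p.2 * hab

lemma monotoneOn_concaveMajorant (hS : (affineMajorants ω).Nonempty) :
    MonotoneOn (concaveMajorant ω) (Icc 0 1) := by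
  refine fun x hx y _ hxy => le_csInf (hS.image _) ?_
  rintro _ ⟨p, hp, rfl⟩
  linarith [concaveMajorant_le hx hp, mul_le_mul_of_nonneg_left hxy hp.1]

end Majorant

section Subadditive

variable {f : ℝ → ℝ}

lemma ConcaveOn.mul_le_map_mul (hf : ConcaveOn ℝ (Icc 0 1) f) (h0 : 0 ≤ f 0) {t x : ℝ}
    (ht : t ∈ Icc (0:ℝ) 1) (hx : x ∈ Icc (0:ℝ) 1) : t * f x ≤ f (t * x) := by
  have h := hf.2 hx (left_mem_Icc.2 zero_le_one) ht.1 (sub_nonneg.2 ht.2) (add_sub_cancel t 1)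
  simp only [smul_eq_mul, mul_zero, add_zero] at h
  nlinarith [mul_nonneg (sub_nonneg.2 ht.2) h0]

lemma ConcaveOn.add_le_of_map_zero_nonneg (hf : ConcaveOn ℝ (Icc 0 1) f) (h0 : 0 ≤ f 0)
    {a b : ℝ} (ha : 0 ≤ a) (hb : 0 ≤ b) (hab : a + b ≤ 1) : f (a + b) ≤ f a + f b := by
  rcases (add_nonneg ha hb).eq_or_lt with hs | hs
  · obtain ⟨rfl, rfl⟩ : a = 0 ∧ b = 0 := ⟨by linarith, by linarith⟩
    simpa using h0
  have hsI : a + b ∈ Icc (0:ℝ) 1 := ⟨hs.le, hab⟩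
  have hscale : ∀ c, 0 ≤ c → c ≤ a + b → c / (a + b) * f (a + b) ≤ f c := fun c hc hcs => by
    simpa [div_mul_cancel₀ c hs.ne'] using
      hf.mul_le_map_mul h0 ⟨div_nonneg hc hs.le, (div_le_one hs).2 hcs⟩ hsI
  have hsum : a / (a + b) * f (a + b) + b / (a + b) * f (a + b) = f (a + b) := by
    field_simp
  linarith [hscale a ha (by linarith), hscale b hb (by linarith)]

lemma abs_sub_le_of_monotoneOn_of_subadd (hmono : MonotoneOn f (Icc 0 1))
    (hsub : ∀ a b : ℝ, 0 ≤ a → 0 ≤ b → a + b ≤ 1 → f (a + b) ≤ f a + f b)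
    {x y : ℝ} (hx : x ∈ Icc (0:ℝ) 1) (hy : y ∈ Icc (0:ℝ) 1) : |f y - f x| ≤ f |y - x| := by
  wlog hxy : x ≤ y generalizing x y
  · rw [abs_sub_comm, abs_sub_comm y]
    exact this hy hx (le_of_not_ge hxy)
  have hadd := hsub x (y - x) hx.1 (sub_nonneg.2 hxy) (by linarith [hy.2])
  rw [add_sub_cancel] at hadd
  rw [abs_of_nonneg (sub_nonneg.2 (hmono hx hy hxy)), abs_of_nonneg (sub_nonneg.2 hxy)]
  linarith

end Subadditive

lemma abs_sub_mem_Icc {x y : ℝ} (hx : x ∈ Icc (0:ℝ) 1) (hy : y ∈ Icc (0:ℝ) 1) :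
    |y - x| ∈ Icc (0:ℝ) 1 :=
  ⟨abs_nonneg _, abs_sub_le_of_nonneg_of_le hy.1 hy.2 hx.1 hx.2⟩

lemma continuousOn_Icc_of_abs_sub_le {f g : ℝ → ℝ} (hg : ContinuousWithinAt g (Icc 0 1) 0)
    (hg0 : g 0 = 0) (h : ∀ x ∈ Icc (0:ℝ) 1, ∀ y ∈ Icc (0:ℝ) 1, |f y - f x| ≤ g |y - x|) :
    ContinuousOn f (Icc 0 1) := by
  intro x hx
  have hdist : Tendsto (fun y => |y - x|) (𝓝[Icc 0 1] x) (𝓝[Icc 0 1] 0) := by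
    refine tendsto_nhdsWithin_iff.2
      ⟨?_, eventually_nhdsWithin_of_forall fun y hy => abs_sub_mem_Icc hx hy⟩
    exact ((continuous_id.sub continuous_const).abs.tendsto' x 0 (by simp)).mono_left
      nhdsWithin_le_nhds
  have hgd := hg.tendsto.comp hdist
  rw [hg0] at hgd
  exact tendsto_iff_norm_sub_tendsto_zero.2 <|
    squeeze_zero' (Eventually.of_forall fun _ => norm_nonneg _)
      (eventually_nhdsWithin_of_forall fun y hy => h x hx y hy) hgd

namespace IsModCont

variable {ω : ℝ → ℝ} {x : ℝ}

lemma le_nat_mul_s13 (hω : IsModCont ω) (hx : x ∈ Icc (0:ℝ) 1) :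
    ∀ (n : ℕ) {t : ℝ}, t ∈ Icc (0:ℝ) 1 → t ≤ n * x → ω t ≤ n * ω x
  | 0, t, ht, h => by
    obtain rfl : t = 0 := le_antisymm (by simpa using h) ht.1
    simp [hω.map_zero]
  | n + 1, t, ht, h => by
    have hωx := hω.nonneg x hx
    rcases le_or_gt t x with htx | hxt
    · have := hω.monotoneOn ht hx htx
      push_cast
      nlinarith [n.cast_nonneg (α := ℝ)]
    · have hrest := le_nat_mul_s13 hω hx n ⟨by linarith, by linarith [ht.2, hx.1]⟩
        (by push_cast at h; linarith : t - x ≤ n * x)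
      have hadd := hω.subadd x (t - x) hx.1 (by linarith) (by linarith [ht.2])
      rw [add_sub_cancel] at hadd
      push_cast
      linarith

lemma mem_affineMajorants (hω : IsModCont ω) (hx : x ∈ Ioc (0:ℝ) 1) :
    (ω x / x, ω x) ∈ affineMajorants ω := by
  have hxI : x ∈ Icc (0:ℝ) 1 := Ioc_subset_Icc_self hx
  have hωx := hω.nonneg x hxI
  refine ⟨div_nonneg hωx hx.1.le, fun t ht => ?_⟩
  have hq : 0 ≤ t / x := div_nonneg ht.1 hx.1.le
  have hceil : t ≤ ⌈t / x⌉₊ * x := (div_le_iff₀ hx.1).1 (Nat.le_ceil _)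
  calc ω t ≤ ⌈t / x⌉₊ * ω x := hω.le_nat_mul_s13 hxI _ ht hceil
    _ ≤ (t / x + 1) * ω x := mul_le_mul_of_nonneg_right (Nat.ceil_lt_add_one hq).le hωx
    _ = ω x / x * t + ω x := by field_simp

lemma concaveMajorant_zero (hω : IsModCont ω) : concaveMajorant ω 0 = 0 := by
  have h0 : (0:ℝ) ∈ Icc (0:ℝ) 1 := left_mem_Icc.2 zero_le_one
  refine le_antisymm ?_ (hω.map_zero.symm.le.trans
    (le_concaveMajorant (affineMajorants_nonempty_of_monotoneOn hω.monotoneOn) h0))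
  have hlim := ((hω.continuousOn 0 h0).mono Ioc_subset_Icc_self).tendsto
  rw [hω.map_zero] at hlim
  have := left_nhdsWithin_Ioc_neBot (zero_lt_one' ℝ)
  refine ge_of_tendsto hlim (eventually_nhdsWithin_of_forall fun y hy => ?_)
  simpa using concaveMajorant_le h0 (hω.mem_affineMajorants hy)

lemma concaveMajorant_le_two_mul (hω : IsModCont ω) (hx : x ∈ Icc (0:ℝ) 1) :
    concaveMajorant ω x ≤ 2 * ω x := by
  rcases hx.1.eq_or_lt with rfl | hx0
  · simp [hω.concaveMajorant_zero, hω.map_zero]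
  calc concaveMajorant ω x ≤ ω x / x * x + ω x := concaveMajorant_le hx
        (hω.mem_affineMajorants ⟨hx0, hx.2⟩)
    _ = 2 * ω x := by field_simp; ring

end IsModCont

/-- **Lemma 3.** Every modulus of continuity admits an equivalent concave modulus of
continuity: `ω ≤ ω* ≤ 2ω` on `[0,1]`. -/
theorem exists_concave_modulus (ω : ℝ → ℝ) (hω : IsModCont ω) :
    ∃ ωs : ℝ → ℝ, IsModCont ωs ∧ ConcaveOn ℝ (Set.Icc (0:ℝ) 1) ωs ∧
      ∀ x ∈ Set.Icc (0:ℝ) 1, ω x ≤ ωs x ∧ ωs x ≤ 2 * ω x := by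
  have hS := affineMajorants_nonempty_of_monotoneOn hω.monotoneOn
  have hconc := concaveOn_concaveMajorant hS
  have hmono := monotoneOn_concaveMajorant hS
  have hF0 := hω.concaveMajorant_zero
  have hsub : ∀ a b : ℝ, 0 ≤ a → 0 ≤ b → a + b ≤ 1 →
      concaveMajorant ω (a + b) ≤ concaveMajorant ω a + concaveMajorant ω b :=
    fun _ _ ha hb hab => hconc.add_le_of_map_zero_nonneg hF0.ge ha hb hab
  have hcont : ContinuousOn (concaveMajorant ω) (Icc 0 1) :=
    continuousOn_Icc_of_abs_sub_le ((hω.continuousOn 0 (left_mem_Icc.2 zero_le_one)).const_mul 2)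
      (by simp [hω.map_zero]) fun x hx y hy =>
        (abs_sub_le_of_monotoneOn_of_subadd hmono hsub hx hy).trans
          (hω.concaveMajorant_le_two_mul (abs_sub_mem_Icc hx hy))
  refine ⟨concaveMajorant ω, ⟨hcont, hmono, fun x hx => ?_, hF0, hsub⟩, hconc,
    fun x hx => ⟨le_concaveMajorant hS hx, hω.concaveMajorant_le_two_mul hx⟩⟩
  exact (hω.nonneg x hx).trans (le_concaveMajorant hS hx)
end
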